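/- arXiv:1709.08904 — 8 statements merged into one kernel-verified Lean document; each statement's English description precedes it below -/
import Mathlib

section
/- For integers α, β with 0 ≤ β < α, consider the map F on Z² given by (x,y) ↦ (x + α(y - sign(x)) + β, y - sign(x)), where sign(x) = 1 if x ≥ 0 and -1 if x < 0. This map is a bijection of Z². -/
/-- sign(x) = 1 if x ≥ 0, -1 otherwise. -/
def isign (n : ℤ) : ℤ := if 0 ≤ n then 1 else -1

/-- The lattice map F(x,y) = (x + α(y - sign x) + β, y - sign x). -/
def latticeF (α β : ℤ) (p : ℤ × ℤ) : ℤ × ℤ :=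
  (p.1 + α * (p.2 - isign p.1) + β, p.2 - isign p.1)

theorem stmt0 (α β : ℤ) (hβ : 0 ≤ β) (hαβ : β < α) :
    Function.Bijective (latticeF α β) := by
  rw [Function.bijective_iff_has_inverse]
  refine ⟨fun q => (q.1 - α * q.2 - β, q.2 + isign (q.1 - α * q.2 - β)), ?_, ?_⟩
  · intro ⟨x, y⟩
    simp only [latticeF]
    have h1 : x + α * (y - isign x) + β - α * (y - isign x) - β = x := by ring
    rw [h1]
    simp
  · intro ⟨u, v⟩
    simp only [latticeF]
    rw [Prod.mk.injEq]
    constructor <;> ring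
end

section
/- Let α > 2β ≥ 0. The interval-exchange map F on Z₊ with interval lengths |Δ_{2m-1}| = (α-2β)m, |Δ_{2m}| = β(2m-1) and translations τ_{2m-1} = 4βm, τ_{2m} = (2β-α)(2m-1) (m ≥ 1) induces the permutation σ of N given by σ(2) = 1, σ(2n+2) = 2n, σ(2n-1) = 2n+1 for n ≥ 1. -/
/-!
The intervals whose images precede that of `Δ_j` are `Δ_1, …, Δ_{j-1}`, together with
`Δ_{j+1}, Δ_{j+3}` when `j` is odd and without `Δ_{j-3}, Δ_{j-1}` when `j` is even (only `Δ_{j-1}`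
when `j = 2`). The translation `τ_j` is exactly the signed length of these corrections:
`τ_{2m-1} = |Δ_{2m}| + |Δ_{2m+2}|` and `τ_{2m} = -(|Δ_{2m-3}| + |Δ_{2m-1}|)`.
-/

/-- The permutation σ: σ(2) = 1, σ(2n+2) = 2n, σ(2n-1) = 2n+1 for n ≥ 1. -/
def sigma10 (j : ℕ) : ℕ := if j = 2 then 1 else if j % 2 = 0 then j - 2 else j + 2

/-- Interval lengths: |Δ_{2m-1}| = (α-2β)m, |Δ_{2m}| = β(2m-1). -/
def len10 (α β : ℤ) (k : ℕ) : ℤ :=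
  if k % 2 = 1 then (α - 2 * β) * (((k : ℤ) + 1) / 2) else β * ((k : ℤ) - 1)

/-- Translations: τ_{2m-1} = 4βm, τ_{2m} = (2β-α)(2m-1). -/
def tau10 (α β : ℤ) (k : ℕ) : ℤ :=
  if k % 2 = 1 then 2 * β * ((k : ℤ) + 1) else (2 * β - α) * ((k : ℤ) - 1)

/-- Left endpoint of Δ_{j+1}: cumulative sum of lengths. -/
def delta10 (α β : ℤ) (j : ℕ) : ℤ := ∑ i ∈ Finset.range j, len10 α β (i + 1)

open Finset

section

variable (α β : ℤ)

lemma delta10_succ (m : ℕ) : delta10 α β (m + 1) = delta10 α β m + len10 α β (m + 1) :=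
  sum_range_succ _ _

lemma delta10_eq_sum_Icc (m : ℕ) : delta10 α β m = ∑ k ∈ Icc 1 m, len10 α β k := by
  induction m with
  | zero => rfl
  | succ m ih => rw [delta10_succ, ih, sum_Icc_succ_top (by omega)]

lemma len10_two_mul_add_one (m : ℕ) : len10 α β (2 * m + 1) = (α - 2 * β) * (m + 1) := by
  rw [len10, if_pos (by omega)]
  congr 1
  omega

lemma len10_two_mul_add_two (m : ℕ) : len10 α β (2 * m + 2) = β * (2 * m + 1) := by
  rw [len10, if_neg (by omega)]
  push_cast
  ring

lemma tau10_two_mul_add_one (m : ℕ) : tau10 α β (2 * m + 1) = 2 * β * (2 * m + 2) := by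
  rw [tau10, if_pos (by omega)]
  push_cast
  ring

lemma tau10_two_mul_add_two (m : ℕ) : tau10 α β (2 * m + 2) = (2 * β - α) * (2 * m + 1) := by
  rw [tau10, if_neg (by omega)]
  push_cast
  ring

lemma tau10_odd_eq_len10_add_len10 (n : ℕ) :
    tau10 α β (2 * n + 1) = len10 α β (2 * n + 2) + len10 α β (2 * n + 4) := by
  rw [tau10_two_mul_add_one, len10_two_mul_add_two, show 2 * n + 4 = 2 * (n + 1) + 2 by ring,
    len10_two_mul_add_two]
  push_cast
  ring

lemma len10_add_len10_add_tau10_even (n : ℕ) :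
    len10 α β (2 * n + 1) + len10 α β (2 * n + 3) + tau10 α β (2 * n + 4) = 0 := by
  rw [len10_two_mul_add_one, show 2 * n + 3 = 2 * (n + 1) + 1 by ring, len10_two_mul_add_one,
    show 2 * n + 4 = 2 * (n + 1) + 2 by ring, tau10_two_mul_add_two]
  push_cast
  ring

lemma len10_one_add_tau10_two : len10 α β 1 + tau10 α β 2 = 0 := by
  rw [len10, tau10]
  norm_num

end

lemma filter_sigma10_lt_odd (n : ℕ) :
    (range (sigma10 (2 * n + 1) + 3)).filter (fun k => 1 ≤ k ∧ sigma10 k < sigma10 (2 * n + 1))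
      = Icc 1 (2 * n) ∪ {2 * n + 2, 2 * n + 4} := by
  ext k
  simp only [mem_filter, mem_range, mem_union, mem_Icc, mem_insert, mem_singleton]
  unfold sigma10
  split_ifs <;> omega

lemma filter_sigma10_lt_even (n : ℕ) :
    (range (sigma10 (2 * n + 4) + 3)).filter (fun k => 1 ≤ k ∧ sigma10 k < sigma10 (2 * n + 4))
      = insert (2 * n + 2) (Icc 1 (2 * n)) := by
  ext k
  simp only [mem_filter, mem_range, mem_Icc, mem_insert]
  unfold sigma10
  split_ifs <;> omega

theorem stmt10_general (α β : ℤ) (j : ℕ) (hj : 1 ≤ j) :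
    delta10 α β (j - 1) + tau10 α β j =
      ∑ k ∈ (Finset.range (sigma10 j + 3)).filter
          (fun k => 1 ≤ k ∧ sigma10 k < sigma10 j), len10 α β k := by
  obtain ⟨n, rfl⟩ | rfl | ⟨n, rfl⟩ : (∃ n, j = 2 * n + 1) ∨ j = 2 ∨ ∃ n, j = 2 * n + 4 := by
    rcases Nat.even_or_odd' j with ⟨n, rfl | rfl⟩
    · rcases n with _ | _ | n
      · omega
      · exact Or.inr (Or.inl rfl)
      · exact Or.inr (Or.inr ⟨n, by ring⟩)
    · exact Or.inl ⟨n, rfl⟩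
  · have hdisj : Disjoint (Icc 1 (2 * n)) {2 * n + 2, 2 * n + 4} := by
      simp only [disjoint_left, mem_Icc, mem_insert, mem_singleton]
      omega
    rw [filter_sigma10_lt_odd, sum_union hdisj, sum_pair (by omega), ← delta10_eq_sum_Icc,
      Nat.add_sub_cancel, tau10_odd_eq_len10_add_len10]
  · rw [show (range (sigma10 2 + 3)).filter (fun k => 1 ≤ k ∧ sigma10 k < sigma10 2) = ∅ by decide,
      sum_empty, show 2 - 1 = 0 + 1 from rfl, delta10_succ, delta10, sum_range_zero, zero_add]
    exact len10_one_add_tau10_two α β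
  · rw [filter_sigma10_lt_even, sum_insert (by simp), ← delta10_eq_sum_Icc,
      show 2 * n + 4 - 1 = 2 * n + 1 + 1 + 1 by omega, delta10_succ, delta10_succ, delta10_succ]
    simp only [Nat.add_assoc, Nat.reduceAdd]
    linear_combination len10_add_len10_add_tau10_even α β n

/-- The IET sends the left endpoint of Δ_j to the sum of the lengths of the intervals
whose image position precedes σ(j); i.e. F induces the permutation σ. -/
theorem stmt10 (α β : ℤ) (hβ : 0 ≤ β) (hαβ : 2 * β < α) (j : ℕ) (hj : 1 ≤ j) :
    delta10 α β (j - 1) + tau10 α β j =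
      ∑ k ∈ (Finset.range (sigma10 j + 3)).filter
          (fun k => 1 ≤ k ∧ sigma10 k < sigma10 j), len10 α β k :=
  stmt10_general α β j hj
end

section
/- For the interval-exchange map F on Z₊, the code C(x) = (c(Fᵗ(x)))_{t≥0} (where c(x) = n iff x ∈ Δ_n) is periodic with period T if and only if the orbit of x under F is periodic with period T. -/
/-- For an invertible map which is a translation on each (finite) level set of the
coding function `c`, the code of `x` is periodic with period `T` iff the orbit is. -/
theorem stmt11 (F : ℤ → ℤ) (hF : Function.Bijective F) (c : ℤ → ℕ)
    (hfin : ∀ n : ℕ, {x : ℤ | c x = n}.Finite)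
    (hrigid : ∀ a b : ℤ, c a = c b → F a - a = F b - b)
    (x : ℤ) (T : ℕ) (hT : 0 < T) :
    (∀ t : ℕ, c (F^[t + T] x) = c (F^[t] x)) ↔ F^[T] x = x := by
  constructor
  · intro h
    have hd : ∀ t : ℕ, F^[t + T] x - F^[t] x = F^[T] x - x := by
      intro t
      induction t with
      | zero => simp
      | succ n ih =>
        have h1 := hrigid (F^[n + T] x) (F^[n] x) (h n)
        have e1 : F^[n + 1 + T] x = F (F^[n + T] x) := by
          rw [show n + 1 + T = (n + T) + 1 by ring, Function.iterate_succ_apply']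
        have e2 : F^[n + 1] x = F (F^[n] x) := Function.iterate_succ_apply' F n x
        rw [e1, e2]
        omega
    set d := F^[T] x - x with hdef
    have hk : ∀ k : ℕ, F^[k * T] x = x + k * d := by
      intro k
      induction k with
      | zero => simp
      | succ n ih =>
        have e : (n + 1) * T = n * T + T := by ring
        rw [e]
        have h2 := hd (n * T)
        push_cast
        linarith [ih]
    have hc : ∀ k : ℕ, c (F^[k * T] x) = c x := by
      intro k
      induction k with
      | zero => simp
      | succ n ih =>
        have e : (n + 1) * T = n * T + T := by ring
        rw [e, h (n * T), ih]
    have hd0 : d = 0 := by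
      by_contra hne
      have hinj : Function.Injective (fun k : ℕ => x + (k : ℤ) * d) := by
        intro a b hab
        simp only at hab
        have h3 : (a : ℤ) * d = (b : ℤ) * d := by linarith
        have := mul_right_cancel₀ hne h3
        exact_mod_cast this
      have hinf : Set.Infinite {y : ℤ | c y = c x} := by
        apply Set.infinite_of_injective_forall_mem hinj
        intro k
        have := hc k
        rw [hk k] at this
        exact this
      exact hinf (hfin (c x))
    have h1 := hk 1
    simp [hd0] at h1
    exact h1
  · intro hp t
    rw [Function.iterate_add_apply, hp]
end

section
/- For an invertible piecewise-translation F of Z₊ with intervals Δ₁, Δ₂, … ordered left to right: if the codes satisfy C(x) < C(x') in lexicographic order then x < x'; conversely if x < x' then C(x) ≤ C(x') lexicographically. -/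
/-- Strict lexicographic order on codes. -/
def lexLT (C C' : ℕ → ℕ) : Prop := ∃ i, (∀ k < i, C k = C' k) ∧ C i < C' i

/-- The code of a point: the sequence of interval indices visited by its forward orbit. -/
def code12 (F : ℤ → ℤ) (c : ℤ → ℕ) (x : ℤ) : ℕ → ℕ := fun t => c (F^[t] x)

lemma diff_preserved (F : ℤ → ℤ) (c : ℤ → ℕ)
    (hrigid : ∀ a b : ℤ, c a = c b → F a - a = F b - b) (x x' : ℤ) :
    ∀ t : ℕ, (∀ k < t, code12 F c x k = code12 F c x' k) →
      F^[t] x - F^[t] x' = x - x' := by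
  intro t
  induction t with
  | zero => intro _; simp
  | succ n ih =>
    intro h
    have h1 : F^[n] x - F^[n] x' = x - x' := ih fun k hk => h k (Nat.lt_succ_of_lt hk)
    have h2 : c (F^[n] x) = c (F^[n] x') := h n (Nat.lt_succ_self n)
    have h3 := hrigid _ _ h2
    rw [Function.iterate_succ_apply', Function.iterate_succ_apply']
    omega

theorem stmt12 (F : ℤ → ℤ) (hF : Function.Bijective F) (c : ℤ → ℕ)
    (hmono : ∀ a b : ℤ, a ≤ b → c a ≤ c b)
    (hrigid : ∀ a b : ℤ, c a = c b → F a - a = F b - b)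
    (x x' : ℤ) :
    (lexLT (code12 F c x) (code12 F c x') → x < x') ∧
    (x < x' → code12 F c x = code12 F c x' ∨ lexLT (code12 F c x) (code12 F c x')) := by
  constructor
  · rintro ⟨i, hpre, hi⟩
    have hd := diff_preserved F c hrigid x x' i hpre
    by_contra hle
    push_neg at hle
    have : F^[i] x' ≤ F^[i] x := by omega
    have := hmono _ _ this
    simp only [code12] at hi
    omega
  · intro hxx
    by_cases heq : code12 F c x = code12 F c x'
    · exact Or.inl heq
    · right
      have hne : ∃ t, code12 F c x t ≠ code12 F c x' t := by
        by_contra h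
        push_neg at h
        exact heq (funext h)
      classical
      let i := Nat.find hne
      have hi : code12 F c x i ≠ code12 F c x' i := Nat.find_spec hne
      have hpre : ∀ k < i, code12 F c x k = code12 F c x' k := fun k hk => by
        by_contra hk'
        exact absurd hk (Nat.not_lt.mpr (Nat.find_le hk'))
      have hd := diff_preserved F c hrigid x x' i hpre
      have hlt : F^[i] x < F^[i] x' := by omega
      exact ⟨i, hpre, lt_of_le_of_ne (hmono _ _ hlt.le) hi⟩
end

section
/- Let α > 2β > 0 with gcd(α,β) = 1 and let ᾱ = α/gcd(α,2β). Define F': Z → Z by F'(z) = z + 4β if z mod α < α - 2β, and F'(z) = z - 2(α - 2β) otherwise. If ᾱ is odd, then every orbit of F' is periodic with period ᾱ. -/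
/-!
Modulo `α` every step of `Fred α β` adds `4β`; exactly, `Fred^[n] z = z + 4nβ - 2αw`, where
`w = numWraps α β z n` counts the steps taken from a residue in `[α - 2β, α)`. As
`ᾱ = α / gcd(α, 2β)` is odd, `α ∣ 4kβ ↔ ᾱ ∣ k`. This excludes periods shorter than `ᾱ`, and
shows that the residues `(z + 4iβ) mod α`, `i < ᾱ`, are exactly the `ᾱ` elements of `[0, α)`
congruent to `z` modulo `g = gcd(α, 2β)`. Exactly `2β/g` of them lie in `[α - 2β, α)`, so after
`ᾱ` steps `2αw = 2ᾱg · 2β/g = 4ᾱβ` and the orbit closes up.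
-/

open Finset

/-- The reduced interval-exchange map F' on ℤ. -/
def Fred (α β : ℤ) (z : ℤ) : ℤ :=
  if z % α < α - 2 * β then z + 4 * β else z - 2 * (α - 2 * β)

namespace Int

theorem dvd_mul_iff_ediv_gcd_dvd {a m k : ℤ} (ha : a ≠ 0) :
    a ∣ k * m ↔ a / gcd a m ∣ k := by
  have hg : 0 < gcd a m := gcd_pos_of_ne_zero_left m ha
  obtain ⟨a', m', hcop, ha', hm⟩ := exists_gcd_one hg
  have hg0 : (gcd a m : ℤ) ≠ 0 := by exact_mod_cast hg.ne'
  set g : ℤ := (gcd a m : ℤ)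
  rw [ha', hm, mul_ediv_cancel _ hg0, ← mul_assoc, mul_dvd_mul_iff_right hg0]
  exact ⟨(isCoprime_iff_gcd_eq_one.2 hcop).dvd_of_dvd_mul_right, (·.mul_right _)⟩

theorem card_Ico_filter_modEq_of_dvd {r L : ℤ} (hr : 0 < r) (hL : 0 ≤ L) (hrL : r ∣ L)
    (a v : ℤ) : (#{x ∈ Ico a (a + L) | x ≡ v [ZMOD r]} : ℤ) = L / r := by
  obtain ⟨c, rfl⟩ := hrL
  have hc : 0 ≤ c := nonneg_of_mul_nonneg_right hL hr
  have hr' : (r : ℚ) ≠ 0 := by exact_mod_cast hr.ne'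
  have hshift : ((a + r * c : ℤ) - (v : ℚ)) / r = (a - v) / r + c := by
    push_cast
    field_simp
    ring
  rw [Ico_filter_modEq_card _ _ hr v, hshift, ceil_add_intCast, add_sub_cancel_left,
    mul_ediv_cancel_left _ hr.ne', max_eq_left hc]

end Int

namespace Fred

def numWraps (α β z : ℤ) (n : ℕ) : ℕ :=
  ((range n).filter fun i : ℕ => α - 2 * β ≤ (z + 4 * i * β) % α).card

theorem iterate_eq (α β z : ℤ) (n : ℕ) :
    (Fred α β)^[n] z = z + 4 * n * β - 2 * α * numWraps α β z n := by
  induction n with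
  | zero => simp [numWraps]
  | succ n ih =>
    have hmod : (z + 4 * n * β - 2 * α * numWraps α β z n) % α = (z + 4 * n * β) % α := by
      rw [show z + 4 * n * β - 2 * α * numWraps α β z n
          = z + 4 * n * β + α * (-2 * numWraps α β z n) by ring, Int.add_mul_emod_self_left]
    rw [Function.iterate_succ_apply', ih, Fred, hmod]
    unfold numWraps
    rw [range_add_one, filter_insert]
    by_cases h : (z + 4 * n * β) % α < α - 2 * β
    · rw [if_pos h, if_neg (not_le.2 h)]
      push_cast
      ring
    · rw [if_neg h, if_pos (not_lt.1 h), card_insert_of_notMem (by simp)]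
      push_cast
      ring

theorem dvd_of_iterate_eq_self {α β z : ℤ} {n : ℕ} (h : (Fred α β)^[n] z = z) :
    α ∣ 4 * n * β :=
  ⟨2 * numWraps α β z n, by linarith [iterate_eq α β z n]⟩

variable {α β : ℤ} {abar : ℕ}

theorem dvd_four_mul_mul_iff (hα : α ≠ 0) (habar : (abar : ℤ) = α / Int.gcd α (2 * β))
    (hodd : Odd abar) (k : ℤ) : α ∣ 4 * k * β ↔ (abar : ℤ) ∣ k := by
  have hcop : IsCoprime (abar : ℤ) 2 := Nat.isCoprime_iff_coprime.2 hodd.coprime_two_right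
  rw [show 4 * k * β = 2 * k * (2 * β) by ring, Int.dvd_mul_iff_ediv_gcd_dvd hα, ← habar]
  exact ⟨hcop.dvd_of_dvd_mul_left, (·.mul_left _)⟩

theorem injOn_emod_orbit (hα : α ≠ 0) (habar : (abar : ℤ) = α / Int.gcd α (2 * β))
    (hodd : Odd abar) (z : ℤ) :
    Set.InjOn (fun i : ℕ => (z + 4 * i * β) % α) (range abar) := by
  intro i hi j hj hij
  have hmod : z + 4 * i * β ≡ z + 4 * j * β [ZMOD α] := hij
  have hdvd : α ∣ 4 * ((j : ℤ) - i) * β := by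
    convert hmod.dvd using 1
    ring
  have habar_dvd := (dvd_four_mul_mul_iff hα habar hodd _).1 hdvd
  rw [coe_range, Set.mem_Iio] at hi hj
  have hji := Int.eq_zero_of_abs_lt_dvd habar_dvd (by rw [abs_sub_lt_iff]; omega)
  omega

theorem image_emod_orbit (hα : 0 < α) (habar : (abar : ℤ) = α / Int.gcd α (2 * β))
    (hodd : Odd abar) (z : ℤ) :
    (range abar).image (fun i : ℕ => (z + 4 * i * β) % α) =
      {x ∈ Ico 0 α | x ≡ z [ZMOD Int.gcd α (2 * β)]} := by
  set g : ℤ := (Int.gcd α (2 * β) : ℤ)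
  have hgα : g ∣ α := Int.gcd_dvd_left ..
  refine eq_of_subset_of_card_le ?_ ?_
  · intro x hx
    obtain ⟨i, -, rfl⟩ := mem_image.1 hx
    obtain ⟨c, hc⟩ : g ∣ 4 * i * β := (Int.gcd_dvd_right ..).trans ⟨2 * i, by ring⟩
    rw [mem_filter, mem_Ico]
    refine ⟨⟨Int.emod_nonneg _ hα.ne', Int.emod_lt_of_pos _ hα⟩, ?_⟩
    rw [hc]
    exact (Int.emod_emod_of_dvd _ hgα).trans Int.modEq_add_fac_self
  · have hg : 0 < g := Int.natCast_pos.2 (Int.gcd_pos_of_ne_zero_left _ hα.ne')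
    have hcard := Int.card_Ico_filter_modEq_of_dvd hg hα.le hgα 0 z
    rw [zero_add, ← habar] at hcard
    rw [card_image_of_injOn (injOn_emod_orbit hα.ne' habar hodd z), card_range]
    exact_mod_cast hcard.le

theorem mul_numWraps_period (hβ : 0 ≤ β) (hαβ : 2 * β < α)
    (habar : (abar : ℤ) = α / Int.gcd α (2 * β)) (hodd : Odd abar) (z : ℤ) :
    α * numWraps α β z abar = 2 * abar * β := by
  have hα : 0 < α := by linarith
  set g : ℤ := (Int.gcd α (2 * β) : ℤ)
  have hg : 0 < g := Int.natCast_pos.2 (Int.gcd_pos_of_ne_zero_left _ hα.ne')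
  have hαg : α = abar * g := by rw [habar, Int.ediv_mul_cancel (Int.gcd_dvd_left ..)]
  have hβg : g * (2 * β / g) = 2 * β := Int.mul_ediv_cancel' (Int.gcd_dvd_right ..)
  have himage : ((range abar).filter fun i : ℕ => α - 2 * β ≤ (z + 4 * i * β) % α).image
      (fun i : ℕ => (z + 4 * i * β) % α) = {x ∈ Ico (α - 2 * β) α | x ≡ z [ZMOD g]} := by
    rw [← filter_image, image_emod_orbit hα habar hodd, filter_comm, Ico_filter_le,
      max_eq_right (by linarith)]
  have hwraps : (numWraps α β z abar : ℤ) = 2 * β / g := by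
    rw [numWraps, ← card_image_of_injOn ((injOn_emod_orbit hα.ne' habar hodd z).mono
      (coe_subset.2 (filter_subset _ _))), himage]
    simpa using Int.card_Ico_filter_modEq_of_dvd hg (by linarith) (Int.gcd_dvd_right ..)
      (α - 2 * β) z
  rw [hwraps]
  linear_combination (2 * β / g) * hαg + (abar : ℤ) * hβg

end Fred

theorem stmt14_general (α β : ℤ) (hβ : 0 < β) (hαβ : 2 * β < α)
    (abar : ℕ) (habar : (abar : ℤ) = α / Int.gcd α (2 * β)) (hodd : Odd abar) :
    ∀ z : ℤ, (Fred α β)^[abar] z = z ∧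
      ∀ k : ℕ, 0 < k → k < abar → (Fred α β)^[k] z ≠ z := by
  intro z
  have hα : 0 < α := by linarith
  refine ⟨?_, fun k hk hkabar hfix => ?_⟩
  · rw [Fred.iterate_eq]
    linarith [Fred.mul_numWraps_period hβ.le hαβ habar hodd z]
  · have hdvd := (Fred.dvd_four_mul_mul_iff hα.ne' habar hodd k).1
      (Fred.dvd_of_iterate_eq_self hfix)
    have habar_le := Int.le_of_dvd (by exact_mod_cast hk) hdvd
    omega

theorem stmt14 (α β : ℤ) (hβ : 0 < β) (hαβ : 2 * β < α) (hgcd : Int.gcd α β = 1)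
    (abar : ℕ) (habar : (abar : ℤ) = α / Int.gcd α (2 * β)) (hodd : Odd abar) :
    ∀ z : ℤ, (Fred α β)^[abar] z = z ∧
      ∀ k : ℕ, 0 < k → k < abar → (Fred α β)^[k] z ≠ z :=
  stmt14_general α β hβ hαβ abar habar hodd
end

section
/- Let α > 2β > 0, gcd(α,β) = 1, with 4 | α and ᾱ = α/gcd(α,2β) even. Define F'(z) = z + 4β if z mod α < α - 2β, else z - 2(α - 2β). Then for every z ∈ Z, (F')^{α/4}(z) = z + ε(z)·α, where ε(z) = +1 if z ≡ 0 or 1 (mod 4) and ε(z) = -1 if z ≡ 2 or 3 (mod 4). In particular every orbit of F' is unbounded. -/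
/-- counting residues mod 4 below n -/
lemma cnt4 (n c : ℕ) (hc : c < 4) :
    ((Finset.range n).filter (fun r => r % 4 = c)).card = (n + 3 - c) / 4 := by
  induction n with
  | zero => simp; omega
  | succ n ih =>
    rw [Finset.range_add_one, Finset.filter_insert]
    by_cases h : n % 4 = c
    · rw [if_pos h, Finset.card_insert_of_notMem (by simp), ih]
      omega
    · rw [if_neg h, ih]
      omega

theorem stmt15 (α β : ℤ) (hβ : 0 < β) (hαβ : 2 * β < α) (hgcd : Int.gcd α β = 1)
    (h4 : (4 : ℤ) ∣ α)
    (abar : ℕ) (habar : (abar : ℤ) = α / Int.gcd α (2 * β)) (heven : Even abar) :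
    (∀ z : ℤ, (Fred α β)^[(α / 4).toNat] z =
        z + (if z % 4 = 0 ∨ z % 4 = 1 then 1 else -1) * α) ∧
    ∀ z : ℤ, Set.Infinite (Set.range fun n : ℕ => (Fred α β)^[n] z) := by
  obtain ⟨d, hd⟩ := h4
  have hα0 : 0 < α := by linarith
  have hβodd : β % 2 = 1 := by
    rcases Int.emod_two_eq_zero_or_one β with h | h
    · exfalso
      have h2 : (2:ℤ) ∣ β := Int.dvd_of_emod_eq_zero h
      have h2α : (2:ℤ) ∣ α := ⟨2 * d, by omega⟩
      have := Int.dvd_gcd h2α h2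
      rw [hgcd] at this
      norm_num at this
    · exact h
  set m : ℕ := d.toNat with hmdef
  have hmZ : (m : ℤ) = d := Int.toNat_of_nonneg (by omega)
  have hm : α = 4 * (m : ℤ) := by omega
  have hm0 : 0 < m := by omega
  have hNm : (α / 4).toNat = m := by
    have h1 : α / 4 = (m : ℤ) := by omega
    rw [h1, Int.toNat_natCast]
  set A : ℕ := 4 * m with hAdef
  have hAZ : (A : ℤ) = α := by push_cast; omega
  set B : ℕ := β.toNat with hBdef
  have hBZ : (B : ℤ) = β := Int.toNat_of_nonneg hβ.le
  have hBodd : B % 2 = 1 := by omega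
  have hBA : 2 * B < A := by omega
  have hcop : IsCoprime ((m : ℤ)) β := by
    have h1 : IsCoprime α β := Int.isCoprime_iff_gcd_eq_one.mpr hgcd
    exact h1.of_isCoprime_of_dvd_left ⟨4, by omega⟩
  -- main formula
  have main : ∀ z : ℤ, (Fred α β)^[m] z =
      z + (if z % 4 = 0 ∨ z % 4 = 1 then 1 else -1) * α := by
    intro z
    set c : ℕ := (z % 4).toNat with hcdef
    have hcZ : (c : ℤ) = z % 4 := Int.toNat_of_nonneg (Int.emod_nonneg z (by norm_num))
    have hc4 : c < 4 := by
      have := Int.emod_lt_of_pos z (show (0:ℤ) < 4 by norm_num)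
      omega
    set K : ℕ → ℕ := fun i =>
      ((Finset.range i).filter (fun j : ℕ => ¬ ((z + 4 * (j:ℤ) * β) % α < α - 2 * β))).card with hKdef
    have hiter : ∀ i : ℕ, (Fred α β)^[i] z = z + 4 * (i:ℤ) * β - 2 * α * (K i) := by
      intro i
      induction i with
      | zero => simp [K]
      | succ i ih =>
        rw [Function.iterate_succ_apply', ih, Fred]
        have hmod : (z + 4 * (i:ℤ) * β - 2 * α * (K i)) % α = (z + 4 * (i:ℤ) * β) % α := by
          have h1 : z + 4 * (i:ℤ) * β - 2 * α * (K i)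
              = (z + 4 * (i:ℤ) * β) + α * (-(2 * (K i))) := by ring
          rw [h1, Int.add_mul_emod_self_left]
        rw [hmod]
        by_cases hcnd : (z + 4 * (i:ℤ) * β) % α < α - 2 * β
        · have hK1 : K (i + 1) = K i := by
            simp only [K, Finset.range_add_one, Finset.filter_insert, if_neg (not_not_intro hcnd)]
          rw [if_pos hcnd, hK1]
          push_cast
          ring
        · have hK1 : K (i + 1) = K i + 1 := by
            simp only [K, Finset.range_add_one, Finset.filter_insert, if_pos hcnd]
            rw [Finset.card_insert_of_notMem (by simp)]
          rw [if_neg hcnd, hK1]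
          push_cast
          ring
    set f : ℕ → ℕ := fun j : ℕ => ((z + 4 * (j:ℤ) * β) % α).toNat with hfdef
    have hfZ : ∀ j, (f j : ℤ) = (z + 4 * (j:ℤ) * β) % α := fun j =>
      Int.toNat_of_nonneg (Int.emod_nonneg _ hα0.ne')
    have hflt : ∀ j, f j < A := by
      intro j
      have h1 := Int.emod_lt_of_pos (z + 4 * (j:ℤ) * β) hα0
      have h2 := hfZ j
      omega
    have hfmod : ∀ j, f j % 4 = c := by
      intro j
      have h1 : (z + 4 * (j:ℤ) * β) % α % 4 = (z + 4 * (j:ℤ) * β) % 4 :=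
        Int.emod_emod_of_dvd _ ⟨(m : ℤ), hm⟩
      have h2 : (z + 4 * (j:ℤ) * β) % 4 = z % 4 := by
        have : z + 4 * (j:ℤ) * β = z + 4 * ((j:ℤ) * β) := by ring
        rw [this, Int.add_mul_emod_self_left]
      have h3 := hfZ j
      omega
    have hinj : Set.InjOn f (Finset.range m) := by
      intro j hj j' hj' hjj
      simp only [Finset.coe_range, Set.mem_Iio] at hj hj'
      have h1 : (z + 4 * (j:ℤ) * β) % α = (z + 4 * (j':ℤ) * β) % α := by
        have := congrArg (fun n : ℕ => (n : ℤ)) hjj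
        simpa [hfZ j, hfZ j'] using this
      have h2 : α ∣ (z + 4 * (j:ℤ) * β) - (z + 4 * (j':ℤ) * β) :=
        Int.dvd_of_emod_eq_zero (Int.emod_eq_emod_iff_emod_sub_eq_zero.mp h1)
      obtain ⟨k, hk⟩ := h2
      have h3 : (4:ℤ) * (β * ((j:ℤ) - j')) = 4 * ((m:ℤ) * k) := by
        rw [hm] at hk; linarith [hk]
      have h4 : (m:ℤ) ∣ β * ((j:ℤ) - j') :=
        ⟨k, mul_left_cancel₀ (by norm_num : (4:ℤ) ≠ 0) h3⟩
      have h5 : (m:ℤ) ∣ ((j:ℤ) - j') := hcop.dvd_of_dvd_mul_left h4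
      have h6 : (j:ℤ) - j' = 0 := Int.eq_zero_of_abs_lt_dvd h5 (by
        rw [abs_lt]; omega)
      omega
    set S : Finset ℕ := (Finset.range A).filter (fun r => r % 4 = c) with hSdef
    have hScard : S.card = m := by
      rw [hSdef, cnt4 A c hc4]
      omega
    have himage : Finset.image f (Finset.range m) = S := by
      apply Finset.eq_of_subset_of_card_le
      · intro r hr
        simp only [Finset.mem_image, Finset.mem_range] at hr
        obtain ⟨j, _, rfl⟩ := hr
        simp only [hSdef, Finset.mem_filter, Finset.mem_range]
        exact ⟨hflt j, hfmod j⟩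
      · rw [hScard, Finset.card_image_of_injOn hinj, Finset.card_range]
    have hKm : K m = (S.filter (fun r => A - 2 * B ≤ r)).card := by
      have h1 : (Finset.range m).filter (fun j : ℕ => ¬ ((z + 4 * (j:ℤ) * β) % α < α - 2 * β))
          = (Finset.range m).filter (fun j : ℕ => A - 2 * B ≤ f j) := by
        apply Finset.filter_congr
        intro j _
        have h2 := hfZ j
        constructor <;> intro h <;> omega
      rw [hKdef]
      simp only [h1]
      rw [← himage, Finset.filter_image,
        Finset.card_image_of_injOn (hinj.mono (by
          intro x hx
          simp only [Finset.coe_filter, Set.mem_setOf_eq, Finset.mem_range] at hx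
          simpa using hx.1))]
    have hsplit := Finset.card_filter_add_card_filter_not
      (s := S) (p := fun r => A - 2 * B ≤ r)
    have hlow : S.filter (fun r => ¬ (A - 2 * B ≤ r))
        = (Finset.range (A - 2 * B)).filter (fun r => r % 4 = c) := by
      ext r
      simp only [hSdef, Finset.mem_filter, Finset.mem_range]
      omega
    have hlowcard : (S.filter (fun r => ¬ (A - 2 * B ≤ r))).card = (A - 2 * B + 3 - c) / 4 := by
      rw [hlow, cnt4 _ c hc4]
    have hKval : K m + (A - 2 * B + 3 - c) / 4 = m := by
      rw [hKm, ← hlowcard, ← hScard]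
      exact hsplit
    rw [hiter m]
    by_cases hzc : z % 4 = 0 ∨ z % 4 = 1
    · rw [if_pos hzc]
      have hcc : c = 0 ∨ c = 1 := by omega
      have hβ2 : β = 2 * (K m : ℤ) + 1 := by
        have : B = 2 * K m + 1 := by omega
        omega
      rw [hm, hβ2]
      ring
    · rw [if_neg hzc]
      have hcc : c = 2 ∨ c = 3 := by omega
      have hβ2 : β = 2 * (K m : ℤ) - 1 := by
        have : B + 1 = 2 * K m := by omega
        omega
      rw [hm, hβ2]
      ring
  constructor
  · intro z
    rw [hNm]
    exact main z
  · intro z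
    set e : ℤ := (if z % 4 = 0 ∨ z % 4 = 1 then (1:ℤ) else -1) with hedef
    have he : e = 1 ∨ e = -1 := by
      by_cases h : z % 4 = 0 ∨ z % 4 = 1
      · left; rw [hedef, if_pos h]
      · right; rw [hedef, if_neg h]
    have hiterk : ∀ k : ℕ, (Fred α β)^[k * m] z = z + (k : ℤ) * e * α := by
      intro k
      induction k with
      | zero => simp
      | succ k ih =>
        have h1 : (k + 1) * m = m + k * m := by ring
        rw [h1, Function.iterate_add_apply, ih, main]
        have hm4 : (z + (k:ℤ) * e * α) % 4 = z % 4 := by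
          have h2 : z + (k:ℤ) * e * α = z + 4 * ((k:ℤ) * e * d) := by rw [hd]; ring
          rw [h2, Int.add_mul_emod_self_left]
        rw [hm4, ← hedef]
        push_cast
        ring
    apply Set.infinite_of_injective_forall_mem (f := fun k : ℕ => z + (k:ℤ) * e * α)
    · intro a b hab
      simp only at hab
      have hαe : e * α ≠ 0 := by
        rcases he with h | h <;> rw [h] <;> simp <;> omega
      have h2 : (a:ℤ) * (e * α) = (b:ℤ) * (e * α) := by linear_combination hab
      exact_mod_cast mul_right_cancel₀ hαe h2
    · intro k
      exact ⟨k * m, (hiterk k).symm ▸ rfl⟩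
end

section
/- Let α > 2β > 0 with ᾱ = α/gcd(α,2β) odd, and let F' be the reduced map F'(z) = z + 4β if z mod α < α - 2β, else z - 2(α-2β). For the uniform probability measure μ₀ on {0,…,α-1} and its push-forwards μ_t under F', the expectation E_t(ξ) = Σ_z z·μ_t(z) is independent of t and equals (α-1)/2. -/
open Finset Function

theorem Function.Periodic.sum_range_add_of_le {M : Type*} [AddCommMonoid M] {g : ℤ → M} {n : ℕ}
    (hg : Periodic g n) {c : ℕ} (hc : c ≤ n) :
    ∑ z ∈ range n, g (z + c) = ∑ z ∈ range n, g z := by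
  have hwrap : ∑ z ∈ Ico n (n + c), g z = ∑ z ∈ range c, g z := by
    rw [sum_Ico_eq_sum_range, Nat.add_sub_cancel_left]
    refine sum_congr rfl fun z _ => ?_
    push_cast
    rw [add_comm, hg]
  calc ∑ z ∈ range n, g (z + c)
      = ∑ z ∈ Ico c (n + c), g z := by
        rw [sum_Ico_eq_sum_range, Nat.add_sub_cancel]
        simp only [Nat.cast_add, add_comm]
    _ = ∑ z ∈ range n, g z := by
        rw [← sum_Ico_consecutive _ hc (Nat.le_add_right n c), hwrap, add_comm,
          sum_range_add_sum_Ico _ hc]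

theorem Function.Periodic.sum_range_add {M : Type*} [AddCommMonoid M] {g : ℤ → M} {n : ℕ}
    (hg : Periodic g n) (c : ℤ) :
    ∑ z ∈ range n, g (z + c) = ∑ z ∈ range n, g z := by
  rcases n.eq_zero_or_pos with rfl | hn
  · simp
  obtain ⟨k, hk, hkc⟩ : ∃ k : ℕ, k ≤ n ∧ c = k + c / n * n := by
    have := Int.emod_nonneg c (b := n) (by omega)
    have := Int.emod_lt_of_pos c (b := n) (by omega)
    have := Int.emod_def c n
    exact ⟨(c % n).toNat, by omega, by rw [mul_comm]; omega⟩
  have hp : Periodic g (c / n * n) := by simpa using hg.int_mul (c / n)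
  rw [hkc, ← hg.sum_range_add_of_le hk]
  exact sum_congr rfl fun z _ => by rw [← add_assoc, hp]

theorem sum_range_id_intCast (n : ℕ) : ∑ z ∈ range n, (z : ℤ) = n * (n - 1) / 2 := by
  rw [← Nat.cast_sum, sum_range_id]
  rcases n with _ | n
  · simp
  · push_cast [Int.natCast_ediv]
    simp

theorem sum_range_ite_emod_lt {M : Type*} [AddCommMonoid M] {n k : ℕ} (hk : k ≤ n) (c : ℤ)
    (a b : M) :
    ∑ z ∈ range n, (if ((z : ℤ) + c) % n < k then a else b) = k • a + (n - k) • b := by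
  have hg : Periodic (fun x : ℤ => if x % n < k then a else b) n := fun x => by simp
  rw [hg.sum_range_add c, ← sum_range_add_sum_Ico _ hk]
  have hlow : ∀ z ∈ range k, (if (z : ℤ) % n < k then a else b) = a := fun z hz => by
    rw [mem_range] at hz
    rw [if_pos (by rw [Int.emod_eq_of_lt (by positivity) (by omega)]; omega)]
  have hhigh : ∀ z ∈ Ico k n, (if (z : ℤ) % n < k then a else b) = b := fun z hz => by
    rw [mem_Ico] at hz
    rw [if_neg (by rw [Int.emod_eq_of_lt (by positivity) (by omega)]; omega)]
  rw [sum_congr rfl hlow, sum_congr rfl hhigh, sum_const, sum_const, card_range, Nat.card_Ico]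

theorem Fred_eq_sub_ite (α β z : ℤ) :
    Fred α β z = z + 4 * β - if z % α < α - 2 * β then 0 else 2 * α := by
  unfold Fred; split_ifs <;> ring

theorem Fred_emod (α β z : ℤ) : Fred α β z % α = (z + 4 * β) % α := by
  rw [Fred_eq_sub_ite]
  split_ifs
  · simp
  · rw [sub_eq_add_neg, ← neg_mul, Int.add_mul_emod_self_right]

theorem iterate_Fred_emod (α β z : ℤ) (t : ℕ) :
    (Fred α β)^[t] z % α = (z + 4 * β * t) % α := by
  induction t with
  | zero => simp
  | succ t ih =>
    rw [iterate_succ_apply', Fred_emod, Int.add_emod, ih, ← Int.add_emod]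
    push_cast
    ring_nf

theorem sum_range_iterate_Fred_succ {n b : ℕ} (hb : 2 * b ≤ n) (t : ℕ) :
    ∑ z ∈ range n, (Fred n b)^[t + 1] z = ∑ z ∈ range n, (Fred n b)^[t] z := by
  have hcount := sum_range_ite_emod_lt (Nat.sub_le n (2 * b)) (4 * b * t) (0 : ℤ) (2 * n)
  push_cast [Nat.cast_sub hb] at hcount
  simp only [iterate_succ_apply', Fred_eq_sub_ite, iterate_Fred_emod, sum_sub_distrib,
    sum_add_distrib, hcount]
  rw [Nat.sub_sub_self hb, smul_zero, zero_add, sum_const, card_range, nsmul_eq_mul,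
    nsmul_eq_mul]
  push_cast
  ring

theorem stmt18_general (α β : ℤ) (hβ : 0 < β) (hαβ : 2 * β < α) :
    ∀ t : ℕ, (∑ z ∈ Finset.range α.toNat, (Fred α β)^[t] (z : ℤ)) = α * (α - 1) / 2 := by
  lift α to ℕ using by omega
  lift β to ℕ using hβ.le
  rw [Int.toNat_natCast]
  intro t
  induction t with
  | zero => simpa using sum_range_id_intCast α
  | succ t ih => rw [sum_range_iterate_Fred_succ (by omega), ih]

/-- The expectation of the push-forward under F' of the uniform measure on {0,…,α-1}
is independent of t and equals (α-1)/2; equivalently the α-fold sum equals α(α-1)/2. -/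
theorem stmt18 (α β : ℤ) (hβ : 0 < β) (hαβ : 2 * β < α)
    (abar : ℕ) (habar : (abar : ℤ) = α / Int.gcd α (2 * β)) (hodd : Odd abar) :
    ∀ t : ℕ, (∑ z ∈ Finset.range α.toNat, (Fred α β)^[t] (z : ℤ)) = α * (α - 1) / 2 :=
  stmt18_general α β hβ hαβ
end

section
/- Let α > 2β > 0 with gcd(α,β) = 1 and ᾱ = α/gcd(α,2β) odd, and let F' be the reduced map. Define, for z ∈ Z, T = (α-2β)·Σ_{t=0}^{α-1} y_t·χ₀(y_t) - 2β·Σ_{t=0}^{α-1} y_t·χ₁(y_t), where y_t = (F')ᵗ(z) and χ₀, χ₁ are indicators of even- and odd-order intervals (z mod α ≥ α-2β, resp. z mod α < α-2β). Then T does not depend on z and equals 2αβ(α - 2β). -/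
open Finset Function

theorem Int.gcd_two_mul_dvd_of_odd {a b : ℤ} (h : Odd (a / Int.gcd a b)) :
    (Int.gcd a (2 * b) : ℤ) ∣ b := by
  set g : ℤ := (Int.gcd a b : ℤ)
  set d : ℤ := (Int.gcd a (2 * b) : ℤ)
  have ha : a = g * (a / g) := (Int.mul_ediv_cancel' (Int.gcd_dvd_left a b)).symm
  have hd2g : d ∣ g * 2 := by
    have : d ∣ Int.gcd (2 * a) (2 * b) :=
      Int.dvd_coe_gcd ((Int.gcd_dvd_left a (2 * b)).mul_left 2)
        (Int.gcd_dvd_right a (2 * b))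
    rwa [Int.gcd_mul_left, mul_comm] at this
  have hdg : d ∣ g := by
    have : d ∣ Int.gcd (g * (a / g)) (g * 2) := Int.dvd_coe_gcd (ha ▸ Int.gcd_dvd_left _ _) hd2g
    rwa [Int.gcd_mul_left, Int.isCoprime_iff_gcd_eq_one.mp (Int.isCoprime_two_right.mpr h),
      mul_one, Int.natAbs_natCast] at this
  exact hdg.trans (Int.gcd_dvd_right a b)

theorem Function.Periodic.sum_range_add_mul {M : Type*} [AddCancelCommMonoid M] {f : ℤ → M}
    {n : ℕ} (hf : Periodic f n) (c : ℤ) : Periodic (fun x => ∑ t ∈ range n, f (x + c * t)) c := by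
  intro x
  have hshift := sum_range_succ' (fun t : ℕ => f (x + c * t)) n
  have hwrap : f (x + c * n) = f x := by simpa using hf.int_mul c x
  rw [sum_range_succ, Nat.cast_zero, mul_zero, add_zero, hwrap] at hshift
  simp only [Nat.cast_succ, mul_add_one, ← add_assoc, add_right_comm x _ c] at hshift
  exact (add_right_cancel hshift).symm

theorem Function.Periodic.int_gcd {M : Type*} {f : ℤ → M} {a b : ℤ} (ha : Periodic f a)
    (hb : Periodic f b) : Periodic f (Int.gcd a b) := by
  rw [Int.gcd_eq_gcd_ab, mul_comm a, mul_comm b]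
  exact (ha.int_mul _).add_period (hb.int_mul _)

def chi0 (α β x : ℤ) : ℤ := if x % α < α - 2 * β then 0 else 1

/-- The summand `(α - 2β) x χ₀(x) - 2β x χ₁(x)` of `T`. -/
def weight (α β x : ℤ) : ℤ := if x % α < α - 2 * β then -(2 * β) * x else (α - 2 * β) * x

theorem Fred_eq (α β x : ℤ) : Fred α β x = x + 4 * β - 2 * α * chi0 α β x := by
  unfold Fred chi0; split <;> ring

theorem Fred_modEq (α β x : ℤ) : Fred α β x ≡ x + 4 * β [ZMOD α] :=
  Int.modEq_iff_dvd.mpr ⟨2 * chi0 α β x, by rw [Fred_eq]; ring⟩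

theorem Fred_iterate_modEq (α β z : ℤ) (t : ℕ) :
    (Fred α β)^[t] z ≡ z + 4 * β * t [ZMOD α] := by
  induction t with
  | zero => simp
  | succ t ih =>
    rw [iterate_succ_apply', Nat.cast_succ, mul_add_one, ← add_assoc]
    exact (Fred_modEq α β _).trans (ih.add_right _)

theorem chi0_congr {α β x y : ℤ} (h : x ≡ y [ZMOD α]) : chi0 α β x = chi0 α β y := by
  unfold chi0; rw [h.eq]

theorem chi0_eq_ediv {α β : ℤ} (hβ : 0 ≤ β) (hαβ : 2 * β < α) (x : ℤ) :
    chi0 α β x = (x % α + 2 * β) / α := by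
  have hα : 0 < α := by omega
  have h0 := Int.emod_nonneg x hα.ne'
  have h1 := Int.emod_lt_of_pos x hα
  unfold chi0
  split_ifs with h
  · exact (Int.ediv_eq_zero_of_lt (by omega) (by omega)).symm
  · rw [eq_comm, Int.ediv_eq_iff_of_pos hα]; omega

theorem mul_chi0 {α β : ℤ} (hβ : 0 ≤ β) (hαβ : 2 * β < α) (x : ℤ) :
    α * chi0 α β x = x % α + 2 * β - (x + 2 * β) % α := by
  rw [chi0_eq_ediv hβ hαβ, ← Int.emod_add_emod x α]
  linarith [Int.mul_ediv_add_emod (x % α + 2 * β) α]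

theorem sum_chi0_add_mul {α β : ℤ} {n : ℕ} (hβ : 0 ≤ β) (hαβ : 2 * β < α) (hn : (n : ℤ) = α)
    (hdvd : (Int.gcd α (4 * β) : ℤ) ∣ 2 * β) (z : ℤ) :
    ∑ t ∈ range n, chi0 α β (z + 4 * β * t) = 2 * β := by
  set residues : ℤ → ℤ := fun x => ∑ t ∈ range n, (x + 4 * β * t) % α
  have hper : Periodic (· % α) (n : ℤ) := fun x => by simp [hn]
  have hres : Periodic residues (2 * β) := by
    obtain ⟨k, hk⟩ := hdvd
    have hα : Periodic residues α := fun x => by simp [residues, add_right_comm x α]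
    simpa [hk, mul_comm] using (hα.int_gcd (hper.sum_range_add_mul (4 * β))).int_mul k
  have hα : 0 < α := by omega
  refine mul_left_cancel₀ hα.ne' ?_
  calc α * ∑ t ∈ range n, chi0 α β (z + 4 * β * t)
      = ∑ t ∈ range n, ((z + 4 * β * t) % α + 2 * β - (z + 2 * β + 4 * β * t) % α) := by
        rw [mul_sum]
        refine sum_congr rfl fun t _ => ?_
        rw [mul_chi0 hβ hαβ, add_right_comm z]
    _ = residues z + n * (2 * β) - residues (z + 2 * β) := by
        rw [sum_sub_distrib, sum_add_distrib, sum_const, card_range, nsmul_eq_mul]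
    _ = α * (2 * β) := by rw [hres z, hn]; ring

theorem sum_chi0_iterate {α β : ℤ} {n : ℕ} (hβ : 0 ≤ β) (hαβ : 2 * β < α) (hn : (n : ℤ) = α)
    (hdvd : (Int.gcd α (4 * β) : ℤ) ∣ 2 * β) (z : ℤ) :
    ∑ t ∈ range n, chi0 α β ((Fred α β)^[t] z) = 2 * β := by
  rw [← sum_chi0_add_mul hβ hαβ hn hdvd z]
  exact sum_congr rfl fun t _ => chi0_congr (Fred_iterate_modEq α β z t)

theorem Fred_iterate_eq_self {α β z : ℤ} {n : ℕ} (hn : (n : ℤ) = α)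
    (hcount : ∑ t ∈ range n, chi0 α β ((Fred α β)^[t] z) = 2 * β) :
    (Fred α β)^[n] z = z := by
  have hstep (t : ℕ) : (Fred α β)^[t + 1] z - (Fred α β)^[t] z
      = 4 * β - 2 * α * chi0 α β ((Fred α β)^[t] z) := by
    rw [iterate_succ_apply', Fred_eq]; ring
  have htel := sum_range_sub (fun t => (Fred α β)^[t] z) n
  simp only [hstep, sum_sub_distrib, sum_const, card_range, nsmul_eq_mul, ← mul_sum, hcount, hn,
    iterate_zero_apply] at htel
  linear_combination -htel

theorem Fred_sq_sub_sq (α β x : ℤ) :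
    Fred α β x ^ 2 - x ^ 2
      = -4 * weight α β x + 16 * β ^ 2 + 4 * α * (α - 4 * β) * chi0 α β x := by
  unfold Fred weight chi0; split_ifs <;> ring

theorem sum_weight_iterate {α β z : ℤ} {n : ℕ} (hn : (n : ℤ) = α)
    (hcount : ∑ t ∈ range n, chi0 α β ((Fred α β)^[t] z) = 2 * β) :
    ∑ t ∈ range n, weight α β ((Fred α β)^[t] z) = 2 * α * β * (α - 2 * β) := by
  have htel := sum_range_sub (fun t => (Fred α β)^[t] z ^ 2) n
  simp only [Fred_iterate_eq_self hn hcount, iterate_zero_apply, sub_self, iterate_succ_apply',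
    Fred_sq_sub_sq, sum_add_distrib, ← mul_sum, sum_const, card_range, nsmul_eq_mul, hcount,
    hn] at htel
  linarith

theorem stmt19_general (α β : ℤ) (hβ : 0 < β) (hαβ : 2 * β < α)
    (abar : ℕ) (habar : (abar : ℤ) = α / Int.gcd α (2 * β)) (hodd : Odd abar)
    (z : ℤ) :
    (∑ t ∈ Finset.range α.toNat,
        (if (Fred α β)^[t] z % α < α - 2 * β then -(2 * β) * (Fred α β)^[t] z
         else (α - 2 * β) * (Fred α β)^[t] z)) = 2 * α * β * (α - 2 * β) := by
  have hn : (α.toNat : ℤ) = α := Int.toNat_of_nonneg (by omega)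
  have hdvd : (Int.gcd α (4 * β) : ℤ) ∣ 2 * β := by
    rw [show 4 * β = 2 * (2 * β) by ring]
    exact Int.gcd_two_mul_dvd_of_odd (by rwa [← habar, Int.odd_coe_nat])
  exact sum_weight_iterate hn (sum_chi0_iterate hβ.le hαβ hn hdvd z)

/-- T(z) = (α-2β)·Σ y_t χ₀(y_t) - 2β·Σ y_t χ₁(y_t) is independent of z
and equals 2αβ(α-2β). -/
theorem stmt19 (α β : ℤ) (hβ : 0 < β) (hαβ : 2 * β < α) (hgcd : Int.gcd α β = 1)
    (abar : ℕ) (habar : (abar : ℤ) = α / Int.gcd α (2 * β)) (hodd : Odd abar)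
    (z : ℤ) :
    (∑ t ∈ Finset.range α.toNat,
        (if (Fred α β)^[t] z % α < α - 2 * β then -(2 * β) * (Fred α β)^[t] z
         else (α - 2 * β) * (Fred α β)^[t] z)) = 2 * α * β * (α - 2 * β) :=
  stmt19_general α β hβ hαβ abar habar hodd z
end
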